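/- Let K be a finite simplicial complex, f an injective filtration function, and [α] ∈ H_n(K^f_a) a class born at a and terminating at b < ∞ with ε < (b−a)/2. Then for every injective filtration function g with ‖f − g‖_∞ ≤ ε, the terminal simplex Δ_{g,α} of [α] in K^g satisfies g(Δ_{g,α}) ∈ [b − ε, b + ε]. -/

import Mathlib

open scoped BigOperators

/-- A finite simplicial complex on vertex type `V`: a finite family of nonempty
finite vertex sets closed under passing to nonempty subsets. -/
structure SComplex (V : Type*) where
  faces : Finset (Finset V)
  nonempty_of_mem : ∀ s ∈ faces, s.Nonempty
  down_closed : ∀ s ∈ faces, ∀ t ⊆ s, t.Nonempty → t ∈ faces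

variable {V : Type*} [LinearOrder V]

/-- `f` is an injective filtration function on `K`: face-monotone and injective on faces. -/
def IsSCFiltration (K : SComplex V) (f : Finset V → ℝ) : Prop :=
  (∀ s ∈ K.faces, ∀ t ∈ K.faces, s ⊆ t → f s ≤ f t) ∧
  (∀ s ∈ K.faces, ∀ t ∈ K.faces, f s = f t → s = t)

/-- The sup-distance between `f` and `g` over the faces of `K` is at most `ε`. -/
def DistLE (K : SComplex V) (f g : Finset V → ℝ) (ε : ℝ) : Prop :=
  ∀ s ∈ K.faces, |f s - g s| ≤ ε

/-- The sublevel subcomplex `K^f_r = f⁻¹((-∞, r])`. -/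
noncomputable def sublevel (K : SComplex V) (f : Finset V → ℝ) (r : ℝ) : Finset (Finset V) :=
  K.faces.filter (fun s => f s ≤ r)

variable (𝔽 : Type*) [Field 𝔽]

/-- The simplicial boundary operator on chains (finitely supported functions on
simplices), with signs determined by the linear order on vertices. -/
noncomputable def bdry : (Finset V →₀ 𝔽) →ₗ[𝔽] (Finset V →₀ 𝔽) :=
  Finsupp.lsum 𝔽 (fun s => ∑ x ∈ s,
    ((-1 : 𝔽) ^ (s.filter (fun y => y < x)).card) • Finsupp.lsingle (s.erase x))

/-- The submodule of `n`-chains supported on simplices of `L` (of cardinality `n+1`). -/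
def chainsIn (L : Finset (Finset V)) (n : ℕ) : Submodule 𝔽 (Finset V →₀ 𝔽) where
  carrier := {c | ∀ s ∈ c.support, s ∈ L ∧ s.card = n + 1}
  add_mem' := by
    intro c d hc hd s hs
    rcases Finset.mem_union.mp (Finsupp.support_add hs) with h | h
    · exact hc s h
    · exact hd s h
  zero_mem' := by intro s hs; simp at hs
  smul_mem' := by
    intro a c hc s hs
    exact hc s (Finsupp.support_smul hs)

/-- `n`-cycles supported in `L`. -/
noncomputable def cyclesIn (L : Finset (Finset V)) (n : ℕ) : Submodule 𝔽 (Finset V →₀ 𝔽) :=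
  chainsIn 𝔽 L n ⊓ LinearMap.ker (bdry 𝔽)

/-- `n`-boundaries of `(n+1)`-chains supported in `L`. -/
noncomputable def boundariesIn (L : Finset (Finset V)) (n : ℕ) : Submodule 𝔽 (Finset V →₀ 𝔽) :=
  (chainsIn 𝔽 L (n + 1)).map (bdry 𝔽)

/-- `α` is an `n`-cycle in the subcomplex `L`. -/
def IsCycleIn (L : Finset (Finset V)) (n : ℕ) (α : Finset V →₀ 𝔽) : Prop :=
  α ∈ cyclesIn 𝔽 L n

/-- The class of `α` is trivial in `H_n(L)`. -/
def TrivialIn (L : Finset (Finset V)) (n : ℕ) (α : Finset V →₀ 𝔽) : Prop :=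
  α ∈ boundariesIn 𝔽 L n

/-- `α` and `β` are homologous in `L`. -/
def HomologousIn (L : Finset (Finset V)) (n : ℕ) (α β : Finset V →₀ 𝔽) : Prop :=
  α - β ∈ boundariesIn 𝔽 L n

/-- The homology class `[α] ∈ H_n(K^f_a)` is born at `a`: it is a nontrivial cycle
at level `a` and does not come from any strictly earlier level. -/
def BornAt (K : SComplex V) (f : Finset V → ℝ) (n : ℕ) (α : Finset V →₀ 𝔽) (a : ℝ) : Prop :=
  IsCycleIn 𝔽 (sublevel K f a) n α ∧ ¬ TrivialIn 𝔽 (sublevel K f a) n α ∧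
  ∀ q < a, ¬ ∃ β, IsCycleIn 𝔽 (sublevel K f q) n β ∧ HomologousIn 𝔽 (sublevel K f a) n α β

/-- The class `[α]` terminates at level `b` in the filtration `K^f`. -/
def TerminatesAt (K : SComplex V) (f : Finset V → ℝ) (n : ℕ) (α : Finset V →₀ 𝔽) (b : ℝ) : Prop :=
  TrivialIn 𝔽 (sublevel K f b) n α ∧ ∀ q < b, ¬ TrivialIn 𝔽 (sublevel K f q) n α

/-- `Δ` is the terminal simplex of `[α]` in the filtration `K^f`: the simplex added
at the level where `[α]` terminates. -/
def TerminalSimplex (K : SComplex V) (f : Finset V → ℝ) (n : ℕ) (α : Finset V →₀ 𝔽)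
    (Δ : Finset V) : Prop :=
  Δ ∈ K.faces ∧ TerminatesAt 𝔽 K f n α (f Δ)

/-- `Σ_ε`: the set of terminal simplices of `[α]` over all injective filtration
functions within sup-distance `ε` of `f`. -/
def TermSet (K : SComplex V) (f : Finset V → ℝ) (n : ℕ) (α : Finset V →₀ 𝔽) (ε : ℝ) :
    Set (Finset V) :=
  {Δ | ∃ g, IsSCFiltration K g ∧ DistLE K f g ε ∧ TerminalSimplex 𝔽 K g n α Δ}

/-- `τ` gives birth to a class in `H_n(K^f)`. -/
def IsBirthSimplex (K : SComplex V) (f : Finset V → ℝ) (n : ℕ) (τ : Finset V) : Prop :=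
  τ ∈ K.faces ∧ ∃ β : Finset V →₀ 𝔽, BornAt 𝔽 K f n β (f τ)

/-- `τ` terminates a class in `H_n(K^f)`. -/
def IsTerminalSimplexOf (K : SComplex V) (f : Finset V → ℝ) (n : ℕ) (τ : Finset V) : Prop :=
  τ ∈ K.faces ∧ ∃ (β : Finset V →₀ 𝔽) (a : ℝ),
    BornAt 𝔽 K f n β a ∧ TerminatesAt 𝔽 K f n β (f τ)

/-- The linear order on the faces of `K` induced by `g`. -/
def inducedRel (K : SComplex V) (g : Finset V → ℝ) :
    {s // s ∈ K.faces} → {s // s ∈ K.faces} → Prop :=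
  fun s t => g s.1 < g t.1

/-- `Π_ε`: the set of orders on the faces of `K` induced by injective filtration
functions within sup-distance `ε` of `f`. -/
def OrderSet (K : SComplex V) (f : Finset V → ℝ) (ε : ℝ) :
    Set ({s // s ∈ K.faces} → {s // s ∈ K.faces} → Prop) :=
  {r | ∃ g, IsSCFiltration K g ∧ DistLE K f g ε ∧ r = inducedRel K g}

/-- `f` is generic: equal absolute differences of `f`-values occur only for the
same unordered pair of faces. -/
def Generic (K : SComplex V) (f : Finset V → ℝ) : Prop :=
  ∀ s ∈ K.faces, ∀ t ∈ K.faces, ∀ s' ∈ K.faces, ∀ t' ∈ K.faces,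
    s ≠ t → s' ≠ t' → |f s - f t| = |f s' - f t'| →
    (s = s' ∧ t = t') ∨ (s = t' ∧ t = s')

/-- The rank of the map `H_n(K^f_p) → H_n(K^f_q)`, realized as the dimension of
the image of the cycles at level `p` in the quotient by boundaries at level `q`. -/
noncomputable def persRank (K : SComplex V) (f : Finset V → ℝ) (n : ℕ) (p q : ℝ) : ℕ :=
  Module.finrank 𝔽
    ↥(Submodule.map (boundariesIn 𝔽 (sublevel K f q) n).mkQ (cyclesIn 𝔽 (sublevel K f p) n))

/-- `[a, b)` is a bar of the `n`-th persistence module of `K^f`: the standard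
inclusion–exclusion of ranks equals `1` for all sufficiently small offsets. -/
def IsBar (K : SComplex V) (f : Finset V → ℝ) (n : ℕ) (a b : ℝ) : Prop :=
  a < b ∧ ∃ δ > 0, ∀ ε : ℝ, 0 < ε → ε < δ →
    persRank 𝔽 K f n a (b - ε) + persRank 𝔽 K f n (a - ε) b
      = persRank 𝔽 K f n a b + persRank 𝔽 K f n (a - ε) (b - ε) + 1

/-! An `ε`-perturbation interleaves the two filtrations, `K^f_r ⊆ K^g_{r+ε}` and
`K^g_r ⊆ K^f_{r+ε}`, and being a boundary persists to larger subcomplexes. Hence the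
levels at which `[α]` becomes a boundary in `K^f` and in `K^g` differ by at most `ε`. -/

lemma chainsIn_mono {L L' : Finset (Finset V)} (h : L ⊆ L') (n : ℕ) :
    chainsIn 𝔽 L n ≤ chainsIn 𝔽 L' n :=
  fun _ hc s hs => ⟨h (hc s hs).1, (hc s hs).2⟩

lemma TrivialIn.mono {L L' : Finset (Finset V)} {n : ℕ} {α : Finset V →₀ 𝔽}
    (hα : TrivialIn 𝔽 L n α) (h : L ⊆ L') : TrivialIn 𝔽 L' n α :=
  Submodule.map_mono (chainsIn_mono 𝔽 h (n + 1)) hα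

lemma DistLE.symm {V : Type*} {K : SComplex V} {f g : Finset V → ℝ} {ε : ℝ}
    (hd : DistLE K f g ε) : DistLE K g f ε :=
  fun s hs => abs_sub_comm (f s) (g s) ▸ hd s hs

lemma DistLE.sublevel_subset {V : Type*} {K : SComplex V} {f g : Finset V → ℝ} {ε : ℝ}
    (hd : DistLE K f g ε) (r : ℝ) : sublevel K f r ⊆ sublevel K g (r + ε) := by
  intro s hs
  simp only [sublevel, Finset.mem_filter] at hs ⊢
  have := abs_le.mp (hd s hs.1)
  exact ⟨hs.1, by linarith [hs.2]⟩

lemma TerminatesAt.le_add_of_distLE {K : SComplex V} {f g : Finset V → ℝ} {n : ℕ}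
    {α : Finset V →₀ 𝔽} {b c ε : ℝ} (hf : TerminatesAt 𝔽 K f n α b)
    (hg : TerminatesAt 𝔽 K g n α c) (hd : DistLE K f g ε) : c ≤ b + ε := by
  by_contra! h
  exact hg.2 (b + ε) h (hf.1.mono 𝔽 (hd.sublevel_subset b))

lemma TerminatesAt.abs_sub_le_of_distLE {K : SComplex V} {f g : Finset V → ℝ} {n : ℕ}
    {α : Finset V →₀ 𝔽} {b c ε : ℝ} (hf : TerminatesAt 𝔽 K f n α b)
    (hg : TerminatesAt 𝔽 K g n α c) (hd : DistLE K f g ε) : |c - b| ≤ ε := by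
  have hcb := hf.le_add_of_distLE 𝔽 hg hd
  have hbc := hg.le_add_of_distLE 𝔽 hf hd.symm
  exact abs_sub_le_iff.mpr ⟨by linarith, by linarith⟩

theorem stmt17_general {V : Type*} [LinearOrder V] (𝔽 : Type*) [Field 𝔽]
    (K : SComplex V) (f : Finset V → ℝ)
    (n : ℕ) (α : Finset V →₀ 𝔽) (b : ℝ)
    (hterm : TerminatesAt 𝔽 K f n α b)
    (ε : ℝ) :
    ∀ g : Finset V → ℝ, IsSCFiltration K g → DistLE K f g ε →
      ∀ Δ : Finset V, TerminalSimplex 𝔽 K g n α Δ →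
        b - ε ≤ g Δ ∧ g Δ ≤ b + ε := by
  intro g _ hd Δ hΔ
  obtain ⟨hlo, hhi⟩ := abs_le.mp (hterm.abs_sub_le_of_distLE 𝔽 hΔ.2 hd)
  exact ⟨by linarith, by linarith⟩

/-- for any `ε`-perturbation `g` of `f`, the terminal simplex
`Δ_{g,α}` of `[α]` in `K^g` satisfies `g(Δ_{g,α}) ∈ [b - ε, b + ε]`. -/
theorem stmt17 {V : Type*} [LinearOrder V] (𝔽 : Type*) [Field 𝔽]
    (K : SComplex V) (f : Finset V → ℝ) (hf : IsSCFiltration K f)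
    (n : ℕ) (α : Finset V →₀ 𝔽) (a b : ℝ)
    (hborn : BornAt 𝔽 K f n α a) (hterm : TerminatesAt 𝔽 K f n α b)
    (ε : ℝ) (hε : 0 < ε) (hab : ε < (b - a) / 2) :
    ∀ g : Finset V → ℝ, IsSCFiltration K g → DistLE K f g ε →
      ∀ Δ : Finset V, TerminalSimplex 𝔽 K g n α Δ →
        b - ε ≤ g Δ ∧ g Δ ≤ b + ε :=
  stmt17_general 𝔽 K f n α b hterm ε
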